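/- Assume hypothesis (H1) with some ρ > 0. Let A₀ be the generator of dilations, A₀u = −i( x·∇u + (d/2) u ). Then there exist smooth functions a_{jk} (1≤j,k≤d) on ℝ^d with ∂_x^α a_{jk} = O(⟨x⟩^{−ρ−|α|}) for every multi-index α, and smooth functions b_j, c_j with ∂_x^α b_j = O(⟨x⟩^{−ρ−1−|α|}) and ∂_x^α c_j = O(⟨x⟩^{−ρ−1−|α|}), such that for every Schwartz function u on ℝ^d, P(A₀u) − A₀(Pu) = −2i ( Pu + ∑_{j,k} ∂̃_j^*( a_{jk} ∂̃_k u ) + ∑_j ∂̃_j^*( b_j u ) + ∑_j c_j ∂̃_j u ). -/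

import Mathlib

open MeasureTheory Real Filter

noncomputable section

namespace Paper

def nsq {d : ℕ} (x : Fin d → ℝ) : ℝ := ∑ j, (x j) ^ 2

def jb {d : ℕ} (x : Fin d → ℝ) : ℝ := (1 + nsq x) ^ ((1 : ℝ) / 2)

def br (y : ℝ) : ℝ := (1 + y ^ 2) ^ ((1 : ℝ) / 2)

def pd {d : ℕ} {F : Type*} [NormedAddCommGroup F] [NormedSpace ℝ F]
    (j : Fin d) (f : (Fin d → ℝ) → F) : (Fin d → ℝ) → F :=
  fun x => fderiv ℝ f x (Pi.single j 1)

def pds {d : ℕ} {F : Type*} [NormedAddCommGroup F] [NormedSpace ℝ F]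
    (α : List (Fin d)) (f : (Fin d → ℝ) → F) : (Fin d → ℝ) → F :=
  List.foldr (fun j h => pd j h) f α

structure MetricH1 (d : ℕ) (ρ : ℝ) where
  g : Fin d → Fin d → (Fin d → ℝ) → ℝ
  smooth : ∀ i j, ContDiff ℝ (⊤ : ℕ∞) (g i j)
  symm : ∀ i j x, g i j x = g j i x
  posdef : ∀ x, (Matrix.of fun i j => g i j x).PosDef
  decay : ∀ (α : List (Fin d)) (i j : Fin d), ∃ C > 0, ∀ x,
    |pds α (fun y => g i j y - if i = j then 1 else 0) x|
      ≤ C * jb x ^ (-(α.length : ℝ) - ρ)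

namespace MetricH1
variable {d : ℕ} {ρ : ℝ}

def ginv (M : MetricH1 d ρ) (x : Fin d → ℝ) : Matrix (Fin d) (Fin d) ℝ :=
  (Matrix.of fun i j => M.g i j x)⁻¹

def gd (M : MetricH1 d ρ) (x : Fin d → ℝ) : ℝ :=
  (Matrix.of fun i j => M.g i j x).det ^ ((1 : ℝ) / 4)

end MetricH1

variable {d : ℕ} {ρ : ℝ} {F : Type*} [NormedAddCommGroup F] [NormedSpace ℝ F]

def dtil (M : MetricH1 d ρ) (j : Fin d) (u : (Fin d → ℝ) → F) : (Fin d → ℝ) → F :=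
  pd j fun y => (M.gd y)⁻¹ • u y

def dtilStar (M : MetricH1 d ρ) (j : Fin d) (v : (Fin d → ℝ) → F) : (Fin d → ℝ) → F :=
  fun x => -((M.gd x)⁻¹ • pd j v x)

def Pop (M : MetricH1 d ρ) (u : (Fin d → ℝ) → F) : (Fin d → ℝ) → F :=
  fun x => -(∑ i, ∑ j,
    (M.gd x)⁻¹ • pd i (fun y => (M.ginv y i j * (M.gd y) ^ 2) • dtil M j u y) x)

def rotTil (M : MetricH1 d ρ) (k l : Fin d) (u : (Fin d → ℝ) → F) : (Fin d → ℝ) → F :=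
  fun x => x k • dtil M l u x - x l • dtil M k u x

def p0 (M : MetricH1 d ρ) (x ξ : Fin d → ℝ) : ℝ := ∑ i, ∑ j, M.ginv x i j * ξ i * ξ j

def NonTrapping (M : MetricH1 d ρ) : Prop :=
  ∀ X Ξ : ℝ → Fin d → ℝ,
    (∀ (i : Fin d) (t : ℝ),
      HasDerivAt (fun s => X s i) (2 * ∑ j, M.ginv (X t) i j * Ξ t j) t) →
    (∀ (i : Fin d) (t : ℝ),
      HasDerivAt (fun s => Ξ s i)
        (-(∑ j, ∑ k, pd i (fun y => M.ginv y j k) (X t) * Ξ t j * Ξ t k)) t) →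
    p0 M (X 0) (Ξ 0) = 1 →
    Tendsto (fun t => nsq (X t)) atTop atTop ∧ Tendsto (fun t => nsq (X t)) atBot atTop

def L2 {d : ℕ} {F : Type*} [NormedAddCommGroup F] (f : (Fin d → ℝ) → F) : ℝ :=
  (∫ x, ‖f x‖ ^ 2) ^ ((1 : ℝ) / 2)

def L2T {d : ℕ} {F : Type*} [NormedAddCommGroup F] (T : ℝ) (f : ℝ → (Fin d → ℝ) → F) : ℝ :=
  (∫ t in Set.Icc (0:ℝ) T, ∫ x, ‖f t x‖ ^ 2) ^ ((1 : ℝ) / 2)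

def Ffun (μ ε T : ℝ) : ℝ := if μ ≤ 1/2 then T ^ (1 - 2*μ + 2*ε) else 1

def prime (M : MetricH1 d ρ) (u : ℝ → (Fin d → ℝ) → F) :
    Fin (d+1) → ℝ → (Fin d → ℝ) → F :=
  Fin.cons (fun t x => deriv (fun s => u s x) t) (fun j t x => dtil M j (u t) x)

def Box (M : MetricH1 d ρ) (u : ℝ → (Fin d → ℝ) → F) : ℝ → (Fin d → ℝ) → F :=
  fun t x => deriv (fun τ => deriv (fun σ => u σ x) τ) t + Pop M (u t) x

end Paper

namespace Paper

variable {d : ℕ} {ρ : ℝ}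

/-- The generator of dilations `A₀ u = -i (x·∇u + (d/2) u)`. -/
def A0 (d : ℕ) (u : (Fin d → ℝ) → ℂ) : (Fin d → ℝ) → ℂ :=
  fun x => -Complex.I * ((∑ j, (x j : ℂ) * pd j u x) + ((d : ℂ) / 2) * u x)

/-- A smooth real function all whose derivatives of order `|α|` decay
like `⟨x⟩^{-ρ-m-|α|}`. -/
def RDecay (ρ : ℝ) (m : ℕ) (f : (Fin d → ℝ) → ℝ) : Prop :=
  ContDiff ℝ (⊤ : ℕ∞) f ∧
    ∀ α : List (Fin d), ∃ C, ∀ x,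
      |pds α f x| ≤ C * jb x ^ (-ρ - (m : ℝ) - (α.length : ℝ))

end Paper

/-!
Write `P = -h N_G (h ·)` with `h = g⁻¹`, `G_{ij} = g^{ij} g²` and `N_G w = ∑ ∂_i (G_{ij} ∂_j w)`.
Since `A₀ = -i (D + d/2)` with `D = x·∇`, only `[P, D]` matters. `D` is a derivation with
`[∂_j, D] = ∂_j`, so `N_G (D w) = 2 N_G w + D (N_G w) - N_{DG} w`, and commuting `D` past the
weight `h` produces `ψ = D h / h`. Collecting terms gives `[P, D] = 2 P` plus operators whose
coefficients are built from `D G`, `ψ G`, `h` and `∇ψ`.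

For the decay, `G - δ` and `h - 1` lie in the symbol class `S^{-ρ}`; `D` preserves the order and
`∂_j` lowers it by one. The one analytic point is that `(det g)^q - 1 ∈ S^{-ρ}`, which needs
`det g` bounded below: it is positive and tends to `1` at infinity.
-/

open Topology
open scoped ContDiff

namespace Paper

section PartialDerivatives

variable {d : ℕ} {F : Type*} [NormedAddCommGroup F] [NormedSpace ℝ F]

theorem _root_.ContDiff.pd {f : (Fin d → ℝ) → F} (hf : ContDiff ℝ ∞ f) (j : Fin d) :
    ContDiff ℝ ∞ (pd j f) :=
  (hf.fderiv_right le_rfl).clm_apply contDiff_const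

theorem _root_.ContDiff.pds {f : (Fin d → ℝ) → F} (hf : ContDiff ℝ ∞ f) (α : List (Fin d)) :
    ContDiff ℝ ∞ (pds α f) := by
  induction α with
  | nil => exact hf
  | cons j α ih => exact ih.pd j

@[simp]
theorem pds_nil (f : (Fin d → ℝ) → F) : pds [] f = f := rfl

theorem pds_append_singleton (α : List (Fin d)) (j : Fin d) (f : (Fin d → ℝ) → F) :
    pds (α ++ [j]) f = pds α (pd j f) :=
  List.foldr_append ..

theorem pd_add {f g : (Fin d → ℝ) → F} (hf : Differentiable ℝ f) (hg : Differentiable ℝ g)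
    (j : Fin d) : pd j (fun x => f x + g x) = fun x => pd j f x + pd j g x := by
  funext x
  simp [pd, fderiv_fun_add (hf x) (hg x)]

theorem pd_sub {f g : (Fin d → ℝ) → F} (hf : Differentiable ℝ f) (hg : Differentiable ℝ g)
    (j : Fin d) : pd j (fun x => f x - g x) = fun x => pd j f x - pd j g x := by
  funext x
  simp [pd, fderiv_fun_sub (hf x) (hg x)]

theorem pds_add {f g : (Fin d → ℝ) → F} (hf : ContDiff ℝ ∞ f) (hg : ContDiff ℝ ∞ g)
    (α : List (Fin d)) : pds α (fun x => f x + g x) = fun x => pds α f x + pds α g x := by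
  induction α with
  | nil => rfl
  | cons j α ih =>
    change pd j (pds α _) = fun x => pd j (pds α f) x + pd j (pds α g) x
    rw [ih, pd_add ((hf.pds α).differentiable (by simp)) ((hg.pds α).differentiable (by simp))]

theorem pd_neg (f : (Fin d → ℝ) → F) (j : Fin d) :
    pd j (fun x => -f x) = fun x => -pd j f x := by
  funext x
  simp [pd, fderiv_fun_neg]

theorem pd_smul {f : (Fin d → ℝ) → ℝ} {v : (Fin d → ℝ) → F} (hf : Differentiable ℝ f)
    (hv : Differentiable ℝ v) (j : Fin d) :
    pd j (fun x => f x • v x) = fun x => pd j f x • v x + f x • pd j v x := by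
  funext x
  simp [pd, fderiv_fun_smul (hf x) (hv x), add_comm]

theorem pd_mul {f g : (Fin d → ℝ) → ℝ} (hf : Differentiable ℝ f) (hg : Differentiable ℝ g)
    (j : Fin d) : pd j (fun x => f x * g x) = fun x => pd j f x * g x + f x * pd j g x :=
  pd_smul hf hg j

theorem pd_const_smul {R : Type*} [Semiring R] [Module R F] [SMulCommClass ℝ R F]
    [ContinuousConstSMul R F] {v : (Fin d → ℝ) → F} (hv : Differentiable ℝ v) (c : R)
    (j : Fin d) : pd j (fun x => c • v x) = fun x => c • pd j v x := by
  funext x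
  simp [pd, fderiv_fun_const_smul (hv x) c]

theorem pd_const (c : F) (j : Fin d) : pd j (fun _ : Fin d → ℝ => c) = fun _ => 0 := by
  funext x
  simp [pd]

theorem pd_sub_const (f : (Fin d → ℝ) → F) (c : F) (j : Fin d) :
    pd j (fun x => f x - c) = pd j f := by
  funext x
  simp [pd, fderiv_sub_const]

theorem pds_const (α : List (Fin d)) (c : F) :
    pds α (fun _ => c) = fun _ => if α = [] then c else 0 := by
  induction α with
  | nil => rfl
  | cons j α ih =>
    change pd j (pds α _) = _
    simp [ih, pd_const]

theorem pd_coord (j k : Fin d) :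
    pd j (fun x : Fin d → ℝ => x k) = fun _ => if k = j then 1 else 0 := by
  funext x
  have : HasFDerivAt (fun x : Fin d → ℝ => x k) (ContinuousLinearMap.proj k) x :=
    hasFDerivAt_apply (𝕜 := ℝ) k x
  simp [pd, this.fderiv, Pi.single_apply]

theorem pd_sum {ι : Type*} (s : Finset ι) {f : ι → (Fin d → ℝ) → F}
    (hf : ∀ i ∈ s, Differentiable ℝ (f i)) (j : Fin d) :
    pd j (fun x => ∑ i ∈ s, f i x) = fun x => ∑ i ∈ s, pd j (f i) x := by
  funext x
  simp [pd, fderiv_fun_sum fun i hi => hf i hi x]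

theorem pd_comm {f : (Fin d → ℝ) → F} (hf : ContDiff ℝ ∞ f) (i j : Fin d) :
    pd i (pd j f) = pd j (pd i f) := by
  funext x
  have hf' : Differentiable ℝ (fderiv ℝ f) :=
    (hf.fderiv_right (m := ∞) le_rfl).differentiable (by simp)
  have expand (a b : Fin d) :
      pd a (pd b f) x = fderiv ℝ (fderiv ℝ f) x (Pi.single a 1) (Pi.single b 1) := by
    change fderiv ℝ (fun y => fderiv ℝ f y (Pi.single b 1)) x (Pi.single a 1) = _
    simp [fderiv_clm_apply (hf' x) (differentiableAt_const _)]
  have h2 : minSmoothness ℝ 2 ≤ ∞ := by simpa using WithTop.coe_le_coe.2 (le_top (a := (2 : ℕ∞)))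
  rw [expand, expand, hf.contDiffAt.isSymmSndFDerivAt h2]

theorem pd_rpow {f : (Fin d → ℝ) → ℝ} (hf : Differentiable ℝ f) (hpos : ∀ x, 0 < f x) (q : ℝ)
    (j : Fin d) : pd j (fun x => f x ^ q) = fun x => q * f x ^ (q - 1) * pd j f x := by
  funext x
  have := ((Real.hasDerivAt_rpow_const (p := q) (Or.inl (hpos x).ne')).comp_hasFDerivAt x
    (hf x).hasFDerivAt).fderiv
  rw [pd, show (fun x => f x ^ q) = (fun t => t ^ q) ∘ f from rfl, this]
  simp [pd, mul_assoc]

end PartialDerivatives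

section Symbols

variable {d : ℕ}

theorem one_le_jb (x : Fin d → ℝ) : 1 ≤ jb x :=
  Real.one_le_rpow (le_add_of_nonneg_right (Finset.sum_nonneg fun _ _ => sq_nonneg _))
    (by norm_num)

theorem jb_pos (x : Fin d → ℝ) : 0 < jb x := one_pos.trans_le (one_le_jb x)

theorem abs_apply_le_jb (x : Fin d → ℝ) (k : Fin d) : |x k| ≤ jb x := by
  rw [← Real.sqrt_sq_eq_abs, jb, ← Real.sqrt_eq_rpow]
  refine Real.sqrt_le_sqrt ?_
  have : x k ^ 2 ≤ nsq x := Finset.single_le_sum (fun i _ => sq_nonneg (x i)) (Finset.mem_univ k)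
  linarith

theorem tendsto_jb_cocompact : Tendsto (jb (d := d)) (cocompact _) atTop :=
  tendsto_atTop_mono (fun x => (pi_norm_le_iff_of_nonneg (jb_pos x).le).2 (abs_apply_le_jb x))
    tendsto_norm_cocompact_atTop

theorem exists_bound_jb_rpow_of_le {f : (Fin d → ℝ) → ℝ} {C e e' : ℝ}
    (h : ∀ x, |f x| ≤ C * jb x ^ e) (he : e ≤ e') : ∃ C', ∀ x, |f x| ≤ C' * jb x ^ e' := by
  refine ⟨max C 0, fun x => (h x).trans ?_⟩
  have hpos := Real.rpow_pos_of_pos (jb_pos x) e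
  calc C * jb x ^ e ≤ max C 0 * jb x ^ e := mul_le_mul_of_nonneg_right (le_max_left C 0) hpos.le
    _ ≤ max C 0 * jb x ^ e' :=
      mul_le_mul_of_nonneg_left (Real.rpow_le_rpow_of_exponent_le (one_le_jb x) he)
        (le_max_right C 0)

/-- The estimates of `IsSymbol s f` for derivatives of order at most `n`; the truncation allows
induction on `n` (Leibniz rule, powers `f ^ q`). -/
def SymbolBound (n : ℕ) (s : ℝ) (f : (Fin d → ℝ) → ℝ) : Prop :=
  ∀ α : List (Fin d), α.length ≤ n → ∃ C, ∀ x, |pds α f x| ≤ C * jb x ^ (s - α.length)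

/-- The symbol class `S^s`. -/
def IsSymbol (s : ℝ) (f : (Fin d → ℝ) → ℝ) : Prop :=
  ContDiff ℝ ∞ f ∧ ∀ n, SymbolBound n s f

namespace SymbolBound

variable {n m : ℕ} {s t : ℝ} {f g : (Fin d → ℝ) → ℝ}

theorem exists_bound (h : SymbolBound n s f) : ∃ C, ∀ x, |f x| ≤ C * jb x ^ s := by
  simpa using h [] (Nat.zero_le n)

theorem of_bound (h : ∃ C, ∀ x, |f x| ≤ C * jb x ^ s) : SymbolBound 0 s f := by
  intro α hα
  rw [Nat.le_zero, List.length_eq_zero_iff] at hα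
  subst hα
  simpa using h

theorem of_pd (h₀ : ∃ C, ∀ x, |f x| ≤ C * jb x ^ s) (h : ∀ j, SymbolBound n (s - 1) (pd j f)) :
    SymbolBound (n + 1) s f := by
  intro α hα
  rcases α.eq_nil_or_concat with rfl | ⟨β, j, rfl⟩
  · simpa using h₀
  · obtain ⟨C, hC⟩ := h j β (by simpa using hα)
    refine ⟨C, fun x => ?_⟩
    rw [List.concat_eq_append, pds_append_singleton]
    convert hC x using 3
    simp only [List.length_append, List.length_singleton, Nat.cast_add, Nat.cast_one]
    ring

theorem pd (h : SymbolBound (n + 1) s f) (j : Fin d) : SymbolBound n (s - 1) (pd j f) := by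
  intro α hα
  obtain ⟨C, hC⟩ := h (α ++ [j]) (by simpa using hα)
  refine ⟨C, fun x => ?_⟩
  rw [← pds_append_singleton]
  convert hC x using 3
  simp only [List.length_append, List.length_singleton, Nat.cast_add, Nat.cast_one]
  ring

theorem mono (h : SymbolBound n s f) (hmn : m ≤ n) (hst : s ≤ t) : SymbolBound m t f :=
  fun α hα => by
    obtain ⟨C, hC⟩ := h α (hα.trans hmn)
    exact exists_bound_jb_rpow_of_le hC (by linarith)

theorem add (hf : ContDiff ℝ ∞ f) (hg : ContDiff ℝ ∞ g) (hfs : SymbolBound n s f)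
    (hgs : SymbolBound n s g) : SymbolBound n s (fun x => f x + g x) := by
  intro α hα
  obtain ⟨C, hC⟩ := hfs α hα
  obtain ⟨C', hC'⟩ := hgs α hα
  refine ⟨C + C', fun x => ?_⟩
  rw [pds_add hf hg]
  calc |pds α f x + pds α g x| ≤ |pds α f x| + |pds α g x| := abs_add_le _ _
    _ ≤ (C + C') * jb x ^ (s - α.length) := by linarith [hC x, hC' x]

theorem mul (hf : ContDiff ℝ ∞ f) (hg : ContDiff ℝ ∞ g) (hfs : SymbolBound n s f)
    (hgt : SymbolBound n t g) : SymbolBound n (s + t) (fun x => f x * g x) := by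
  induction n generalizing s t f g with
  | zero =>
    obtain ⟨C, hC⟩ := hfs.exists_bound
    obtain ⟨C', hC'⟩ := hgt.exists_bound
    refine of_bound ⟨C * C', fun x => ?_⟩
    rw [abs_mul, Real.rpow_add (jb_pos x)]
    calc |f x| * |g x| ≤ (C * jb x ^ s) * (C' * jb x ^ t) :=
          mul_le_mul (hC x) (hC' x) (abs_nonneg _) ((abs_nonneg _).trans (hC x))
      _ = C * C' * (jb x ^ s * jb x ^ t) := by ring
  | succ n ih =>
    have hfs' := hfs.mono n.le_succ le_rfl
    have hgt' := hgt.mono n.le_succ le_rfl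
    refine of_pd (ih hf hg hfs' hgt').exists_bound fun j => ?_
    rw [pd_mul (hf.differentiable (by simp)) (hg.differentiable (by simp))]
    have h₁ := ih (hf.pd j) hg (hfs.pd j) hgt'
    have h₂ := ih hf (hg.pd j) hfs' (hgt.pd j)
    exact add ((hf.pd j).mul hg) (hf.mul (hg.pd j)) (h₁.mono le_rfl (by linarith))
      (h₂.mono le_rfl (by linarith))

end SymbolBound

theorem isSymbol_const (c : ℝ) : IsSymbol 0 (fun _ : Fin d → ℝ => c) := by
  refine ⟨contDiff_const, fun n α _ => ⟨|c|, fun x => ?_⟩⟩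
  rw [pds_const]
  split_ifs with hα
  · simp [hα]
  · simpa using mul_nonneg (abs_nonneg c) (Real.rpow_pos_of_pos (jb_pos x) (0 - α.length)).le

theorem isSymbol_zero (s : ℝ) : IsSymbol s (fun _ : Fin d → ℝ => 0) :=
  ⟨contDiff_const, fun n α _ => ⟨0, fun x => by simp [pds_const]⟩⟩

namespace IsSymbol

variable {s t : ℝ} {f g : (Fin d → ℝ) → ℝ}

theorem congr (h : IsSymbol s f) (hfg : ∀ x, f x = g x) : IsSymbol s g :=
  funext hfg ▸ h

theorem exists_bound (h : IsSymbol s f) : ∃ C, ∀ x, |f x| ≤ C * jb x ^ s :=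
  (h.2 0).exists_bound

theorem exists_abs_le (h : IsSymbol s f) (hs : s ≤ 0) : ∃ C, ∀ x, |f x| ≤ C := by
  obtain ⟨C, hC⟩ := h.exists_bound
  simpa using exists_bound_jb_rpow_of_le hC hs

theorem tendsto_cocompact (h : IsSymbol s f) (hs : s < 0) : Tendsto f (cocompact _) (𝓝 0) := by
  obtain ⟨C, hC⟩ := h.exists_bound
  have hjb : Tendsto (fun x => jb x ^ s) (cocompact (Fin d → ℝ)) (𝓝 0) := by
    simpa [Function.comp_def] using
      (tendsto_rpow_neg_atTop (neg_pos.2 hs)).comp tendsto_jb_cocompact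
  exact squeeze_zero_norm' (Eventually.of_forall hC) (by simpa using hjb.const_mul C)

theorem of_pd (hf : ContDiff ℝ ∞ f) (h₀ : ∃ C, ∀ x, |f x| ≤ C * jb x ^ s)
    (h : ∀ j, IsSymbol (s - 1) (pd j f)) : IsSymbol s f :=
  ⟨hf, fun n => n.casesOn (.of_bound h₀) fun n => .of_pd h₀ fun j => (h j).2 n⟩

protected theorem pd (h : IsSymbol s f) (j : Fin d) : IsSymbol (s - 1) (pd j f) :=
  ⟨h.1.pd j, fun n => (h.2 (n + 1)).pd j⟩

theorem mono (h : IsSymbol s f) (hst : s ≤ t) : IsSymbol t f :=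
  ⟨h.1, fun n => (h.2 n).mono le_rfl hst⟩

theorem add (hf : IsSymbol s f) (hg : IsSymbol s g) : IsSymbol s (fun x => f x + g x) :=
  ⟨hf.1.add hg.1, fun n => (hf.2 n).add hf.1 hg.1 (hg.2 n)⟩

theorem mul (hf : IsSymbol s f) (hg : IsSymbol t g) : IsSymbol (s + t) (fun x => f x * g x) :=
  ⟨hf.1.mul hg.1, fun n => (hf.2 n).mul hf.1 hg.1 (hg.2 n)⟩

theorem const_mul (h : IsSymbol s f) (c : ℝ) : IsSymbol s (fun x => c * f x) := by
  simpa using (isSymbol_const c).mul h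

theorem sum {ι : Type*} (u : Finset ι) {f : ι → (Fin d → ℝ) → ℝ}
    (h : ∀ i ∈ u, IsSymbol s (f i)) : IsSymbol s (fun x => ∑ i ∈ u, f i x) := by
  induction u using Finset.cons_induction with
  | empty => simpa using isSymbol_zero s
  | cons i u hi ih =>
    simp only [Finset.sum_cons]
    exact (h i (u.mem_cons_self i)).add (ih fun j hj => h j (Finset.mem_cons_of_mem hj))

end IsSymbol

theorem isSymbol_coord (k : Fin d) : IsSymbol 1 (fun x : Fin d → ℝ => x k) :=
  .of_pd (contDiff_apply ℝ ℝ k) ⟨1, by simpa using abs_apply_le_jb (k := k)⟩ fun j => by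
    simpa [pd_coord] using isSymbol_const (d := d) (if k = j then 1 else 0)

theorem IsSymbol.rdecay {ρ : ℝ} {m : ℕ} {f : (Fin d → ℝ) → ℝ}
    (h : IsSymbol (-ρ - m) f) : RDecay ρ m f :=
  ⟨h.1, fun α => h.2 α.length α le_rfl⟩

end Symbols

section Perturbations

variable {d : ℕ} {s : ℝ}

def DecaysTo (s c : ℝ) (f : (Fin d → ℝ) → ℝ) : Prop :=
  IsSymbol s (fun x => f x - c)

theorem decaysTo_const (s c : ℝ) : DecaysTo s c (fun _ : Fin d → ℝ => c) := by
  simpa [DecaysTo] using isSymbol_zero (d := d) s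

namespace DecaysTo

variable {a b c : ℝ} {f g : (Fin d → ℝ) → ℝ}

theorem congr (h : DecaysTo s c f) (hfg : ∀ x, f x = g x) : DecaysTo s c g :=
  IsSymbol.congr h fun x => by rw [hfg]

theorem contDiff (h : DecaysTo s c f) : ContDiff ℝ ∞ f := by
  simpa using h.1.add (contDiff_const (c := c))

theorem isSymbol (h : DecaysTo s c f) (hs : s ≤ 0) : IsSymbol 0 f := by
  simpa using (IsSymbol.mono h hs).add (isSymbol_const c)

protected theorem pd (h : DecaysTo s c f) (j : Fin d) : IsSymbol (s - 1) (pd j f) := by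
  simpa [pd_sub_const] using IsSymbol.pd h j

theorem add (hf : DecaysTo s a f) (hg : DecaysTo s b g) :
    DecaysTo s (a + b) (fun x => f x + g x) :=
  (IsSymbol.add hf hg).congr fun x => by ring

theorem const_mul (h : DecaysTo s a f) (c : ℝ) : DecaysTo s (c * a) (fun x => c * f x) :=
  (IsSymbol.const_mul h c).congr fun x => by ring

theorem mul (hs : s ≤ 0) (hf : DecaysTo s a f) (hg : DecaysTo s b g) :
    DecaysTo s (a * b) (fun x => f x * g x) :=
  (((IsSymbol.mul hf hg).mono (by linarith)).add
    ((IsSymbol.const_mul hg a).add (IsSymbol.const_mul hf b))).congr fun x => by ring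

theorem sum {ι : Type*} (u : Finset ι) {c : ι → ℝ} {f : ι → (Fin d → ℝ) → ℝ}
    (h : ∀ i ∈ u, DecaysTo s (c i) (f i)) :
    DecaysTo s (∑ i ∈ u, c i) (fun x => ∑ i ∈ u, f i x) := by
  induction u using Finset.cons_induction with
  | empty => simpa using decaysTo_const (d := d) s 0
  | cons i u hi ih =>
    simp only [Finset.sum_cons]
    exact (h i (u.mem_cons_self i)).add (ih fun j hj => h j (Finset.mem_cons_of_mem hj))

theorem prod (hs : s ≤ 0) {ι : Type*} (u : Finset ι) {c : ι → ℝ} {f : ι → (Fin d → ℝ) → ℝ}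
    (h : ∀ i ∈ u, DecaysTo s (c i) (f i)) :
    DecaysTo s (∏ i ∈ u, c i) (fun x => ∏ i ∈ u, f i x) := by
  induction u using Finset.cons_induction with
  | empty => simpa using decaysTo_const (d := d) s 1
  | cons i u hi ih =>
    simp only [Finset.prod_cons]
    exact (h i (u.mem_cons_self i)).mul hs (ih fun j hj => h j (Finset.mem_cons_of_mem hj))

end DecaysTo

theorem decaysTo_det (hs : s ≤ 0) {ι : Type*} [Fintype ι] [DecidableEq ι]
    {A : (Fin d → ℝ) → Matrix ι ι ℝ} {T : Matrix ι ι ℝ}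
    (h : ∀ i j, DecaysTo s (T i j) (fun x => A x i j)) :
    DecaysTo s T.det (fun x => (A x).det) := by
  simp only [Matrix.det_apply']
  exact .sum _ fun σ _ => (DecaysTo.prod hs _ fun i _ => h (σ i) i).const_mul _

end Perturbations

section Powers

theorem exists_abs_rpow_le {c : ℝ} (hc : 0 < c) (M q : ℝ) :
    ∃ K, ∀ t ∈ Set.Icc c M, |t ^ q| ≤ K :=
  isCompact_Icc.exists_bound_of_continuousOn fun t ht =>
    (Real.continuousAt_rpow_const t q (Or.inl (hc.trans_le ht.1).ne')).continuousWithinAt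

theorem exists_abs_rpow_sub_one_le {c M : ℝ} (hc : 0 < c) (hc₁ : c ≤ 1) (hM : 1 ≤ M) (q : ℝ) :
    ∃ L, 0 ≤ L ∧ ∀ t ∈ Set.Icc c M, |t ^ q - 1| ≤ L * |t - 1| := by
  obtain ⟨K, hK⟩ := exists_abs_rpow_le hc M (q - 1)
  have hK₀ : 0 ≤ K := (abs_nonneg _).trans (hK 1 ⟨hc₁, hM⟩)
  refine ⟨|q| * K, by positivity, fun t ht => ?_⟩
  simpa using (convex_Icc c M).norm_image_sub_le_of_norm_hasDerivWithin_le
    (fun y hy => (Real.hasDerivAt_rpow_const (p := q)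
      (Or.inl (hc.trans_le hy.1).ne')).hasDerivWithinAt)
    (fun y hy => by
      rw [norm_mul]
      exact mul_le_mul_of_nonneg_left (hK y hy) (abs_nonneg q)) ⟨hc₁, hM⟩ ht

variable {d : ℕ} {s c : ℝ} {f : (Fin d → ℝ) → ℝ}

theorem DecaysTo.exists_le (hs : s ≤ 0) (h : DecaysTo s 1 f) : ∃ M, 1 ≤ M ∧ ∀ x, f x ≤ M := by
  obtain ⟨C, hC⟩ := IsSymbol.exists_abs_le h hs
  exact ⟨1 + max C 0, by simp, fun x => by linarith [le_abs_self (f x - 1), hC x, le_max_left C 0]⟩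

theorem DecaysTo.isSymbol_rpow (hs : s ≤ 0) (h : DecaysTo s 1 f) (hc : 0 < c)
    (hcf : ∀ x, c ≤ f x) (q : ℝ) : IsSymbol 0 (fun x => f x ^ q) := by
  have hpos (x : Fin d → ℝ) : 0 < f x := hc.trans_le (hcf x)
  have hsmooth (q : ℝ) : ContDiff ℝ ∞ (fun x => f x ^ q) :=
    h.contDiff.rpow_const_of_ne fun x => (hpos x).ne'
  obtain ⟨M, -, hM⟩ := h.exists_le hs
  have hbound (q : ℝ) : ∃ C, ∀ x, |f x ^ q| ≤ C * jb x ^ (0 : ℝ) := by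
    obtain ⟨K, hK⟩ := exists_abs_rpow_le hc M q
    exact ⟨K, fun x => by simpa using hK (f x) ⟨hcf x, hM x⟩⟩
  refine ⟨hsmooth q, fun n => ?_⟩
  -- `∂ⱼ (f ^ q) = q f ^ (q - 1) ∂ⱼ f`: order `n + 1` for `q` comes from order `n` for `q - 1`.
  induction n generalizing q with
  | zero => exact .of_bound (hbound q)
  | succ n ih =>
    refine .of_pd (hbound q) fun j => ?_
    rw [pd_rpow (h.contDiff.differentiable (by simp)) hpos]
    have hq := ((isSymbol_const q).2 n).mul contDiff_const (hsmooth (q - 1)) (ih (q - 1))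
    exact (hq.mul (contDiff_const.mul (hsmooth _)) (h.pd j).1 ((h.pd j).2 n)).mono le_rfl
      (by linarith)

theorem DecaysTo.rpow (hs : s ≤ 0) (h : DecaysTo s 1 f) (hc : 0 < c) (hcf : ∀ x, c ≤ f x)
    (q : ℝ) : DecaysTo s 1 (fun x => f x ^ q) := by
  have hpos (x : Fin d → ℝ) : 0 < f x := hc.trans_le (hcf x)
  obtain ⟨M, hM₁, hM⟩ := h.exists_le hs
  obtain ⟨L, hL₀, hL⟩ := exists_abs_rpow_sub_one_le (lt_min hc one_pos) (min_le_right c 1) hM₁ q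
  obtain ⟨C, hC⟩ := IsSymbol.exists_bound h
  refine .of_pd ((h.contDiff.rpow_const_of_ne fun x => (hpos x).ne').sub contDiff_const)
    ⟨L * C, fun x => ?_⟩ fun j => ?_
  · calc |f x ^ q - 1| ≤ L * |f x - 1| := hL (f x) ⟨(min_le_left c 1).trans (hcf x), hM x⟩
      _ ≤ L * C * jb x ^ s := by rw [mul_assoc]; exact mul_le_mul_of_nonneg_left (hC x) hL₀
  · rw [pd_sub_const, pd_rpow (h.contDiff.differentiable (by simp)) hpos]
    simpa using ((h.isSymbol_rpow hs hc hcf (q - 1)).const_mul q).mul (h.pd j)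

end Powers

section Dilation

variable {d : ℕ} {F : Type*} [NormedAddCommGroup F] [NormedSpace ℝ F]

def dilation (v : (Fin d → ℝ) → F) : (Fin d → ℝ) → F :=
  fun x => ∑ k, x k • pd k v x

theorem _root_.ContDiff.dilation {v : (Fin d → ℝ) → F} (hv : ContDiff ℝ ∞ v) :
    ContDiff ℝ ∞ (dilation v) :=
  ContDiff.sum fun k _ => (contDiff_apply ℝ ℝ k).smul (hv.pd k)

theorem dilation_smul {f : (Fin d → ℝ) → ℝ} {v : (Fin d → ℝ) → F} (hf : Differentiable ℝ f)
    (hv : Differentiable ℝ v) :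
    dilation (fun x => f x • v x) = fun x => dilation f x • v x + f x • dilation v x := by
  funext x
  simp only [dilation, pd_smul hf hv, Finset.sum_smul, Finset.smul_sum, ← Finset.sum_add_distrib]
  exact Finset.sum_congr rfl fun k _ => by simp only [smul_eq_mul]; module

theorem dilation_neg (v : (Fin d → ℝ) → F) :
    dilation (fun x => -v x) = fun x => -dilation v x := by
  funext x
  simp [dilation, pd_neg]

theorem dilation_sum {ι : Type*} (s : Finset ι) {v : ι → (Fin d → ℝ) → F}
    (hv : ∀ i ∈ s, Differentiable ℝ (v i)) :
    dilation (fun x => ∑ i ∈ s, v i x) = fun x => ∑ i ∈ s, dilation (v i) x := by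
  funext x
  simp only [dilation, pd_sum s hv, Finset.smul_sum]
  exact Finset.sum_comm

theorem pd_dilation {v : (Fin d → ℝ) → F} (hv : ContDiff ℝ ∞ v) (j : Fin d) :
    pd j (dilation v) = fun x => pd j v x + dilation (pd j v) x := by
  funext x
  have hsum := pd_sum Finset.univ (f := fun k (y : Fin d → ℝ) => y k • pd k v y)
    (fun k _ => ((contDiff_apply ℝ ℝ k).smul (hv.pd k)).differentiable (by simp)) j
  rw [show dilation v = fun y => ∑ k, y k • pd k v y from rfl, hsum]
  have hterm (k : Fin d) : pd j (fun y => y k • pd k v y) x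
      = (if k = j then pd k v x else 0) + x k • pd k (pd j v) x := by
    rw [pd_smul (differentiable_apply k) ((hv.pd k).differentiable (by simp)), pd_coord,
      pd_comm hv j k]
    split_ifs <;> simp
  simp [hterm, Finset.sum_add_distrib, dilation]

theorem DecaysTo.isSymbol_dilation {s c : ℝ} {f : (Fin d → ℝ) → ℝ} (h : DecaysTo s c f) :
    IsSymbol s (dilation f) :=
  (IsSymbol.sum _ fun k _ => ((isSymbol_coord k).mul (h.pd k)).mono (by linarith)).congr
    fun _ => rfl

end Dilation

section DivergenceForm

variable {d : ℕ} {F : Type*} [NormedAddCommGroup F] [NormedSpace ℝ F]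
  {A B : Fin d → Fin d → (Fin d → ℝ) → ℝ} {v w : (Fin d → ℝ) → F}

def divForm (A : Fin d → Fin d → (Fin d → ℝ) → ℝ) (v : (Fin d → ℝ) → F) : (Fin d → ℝ) → F :=
  fun x => ∑ i, ∑ j, pd i (fun y => A i j y • pd j v y) x

theorem _root_.ContDiff.divForm (hA : ∀ i j, ContDiff ℝ ∞ (A i j)) (hv : ContDiff ℝ ∞ v) :
    ContDiff ℝ ∞ (divForm A v) :=
  ContDiff.sum fun i _ => ContDiff.sum fun j _ => ((hA i j).smul (hv.pd j)).pd i

theorem divForm_sub (hA : ∀ i j, ContDiff ℝ ∞ (A i j)) (hv : ContDiff ℝ ∞ v)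
    (hw : ContDiff ℝ ∞ w) :
    divForm A (fun y => v y - w y) = fun x => divForm A v x - divForm A w x := by
  funext x
  simp only [divForm, ← Finset.sum_sub_distrib]
  refine Finset.sum_congr rfl fun i _ => Finset.sum_congr rfl fun j _ => ?_
  rw [pd_sub (hv.differentiable (by simp)) (hw.differentiable (by simp))]
  simp only [smul_sub]
  exact congrFun (pd_sub (((hA i j).smul (hv.pd j)).differentiable (by simp))
    (((hA i j).smul (hw.pd j)).differentiable (by simp)) i) x

theorem divForm_add (hA : ∀ i j, ContDiff ℝ ∞ (A i j)) (hv : ContDiff ℝ ∞ v)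
    (hw : ContDiff ℝ ∞ w) :
    divForm A (fun y => v y + w y) = fun x => divForm A v x + divForm A w x := by
  funext x
  simp only [divForm, ← Finset.sum_add_distrib]
  refine Finset.sum_congr rfl fun i _ => Finset.sum_congr rfl fun j _ => ?_
  rw [pd_add (hv.differentiable (by simp)) (hw.differentiable (by simp))]
  simp only [smul_add]
  exact congrFun (pd_add (((hA i j).smul (hv.pd j)).differentiable (by simp))
    (((hA i j).smul (hw.pd j)).differentiable (by simp)) i) x

theorem divForm_const_smul {R : Type*} [Semiring R] [Module R F] [SMulCommClass ℝ R F]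
    [ContinuousConstSMul R F] (hA : ∀ i j, ContDiff ℝ ∞ (A i j)) (hv : ContDiff ℝ ∞ v) (c : R) :
    divForm A (fun y => c • v y) = fun x => c • divForm A v x := by
  funext x
  simp only [divForm, Finset.smul_sum]
  refine Finset.sum_congr rfl fun i _ => Finset.sum_congr rfl fun j _ => ?_
  simp only [pd_const_smul (hv.differentiable (by simp)), smul_comm (A i j _) c]
  exact congrFun (pd_const_smul (((hA i j).smul (hv.pd j)).differentiable (by simp)) c i) x

theorem divForm_coeff_add (hA : ∀ i j, ContDiff ℝ ∞ (A i j)) (hB : ∀ i j, ContDiff ℝ ∞ (B i j))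
    (hv : ContDiff ℝ ∞ v) :
    divForm (fun i j y => A i j y + B i j y) v = fun x => divForm A v x + divForm B v x := by
  funext x
  simp only [divForm, ← Finset.sum_add_distrib, add_smul]
  refine Finset.sum_congr rfl fun i _ => Finset.sum_congr rfl fun j _ => ?_
  exact congrFun (pd_add (((hA i j).smul (hv.pd j)).differentiable (by simp))
    (((hB i j).smul (hv.pd j)).differentiable (by simp)) i) x

theorem divForm_coeff_const_mul (hA : ∀ i j, ContDiff ℝ ∞ (A i j)) (hv : ContDiff ℝ ∞ v)
    (c : ℝ) : divForm (fun i j y => c * A i j y) v = fun x => c • divForm A v x := by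
  funext x
  simp only [divForm, Finset.smul_sum, mul_smul]
  refine Finset.sum_congr rfl fun i _ => Finset.sum_congr rfl fun j _ => ?_
  exact congrFun (pd_const_smul (((hA i j).smul (hv.pd j)).differentiable (by simp)) c i) x

end DivergenceForm

section Commutators

variable {d : ℕ} {F : Type*} [NormedAddCommGroup F] [NormedSpace ℝ F]
  {A : Fin d → Fin d → (Fin d → ℝ) → ℝ} {w : (Fin d → ℝ) → F}

theorem pd_smul_pd_dilation {a : (Fin d → ℝ) → ℝ} (ha : ContDiff ℝ ∞ a) (hw : ContDiff ℝ ∞ w)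
    (i j : Fin d) :
    pd i (fun y => a y • pd j (dilation w) y) = fun x =>
      (2 : ℝ) • pd i (fun y => a y • pd j w y) x + dilation (pd i (fun y => a y • pd j w y)) x
        - pd i (fun y => dilation a y • pd j w y) x := by
  have hz : ContDiff ℝ ∞ (fun y => a y • pd j w y) := ha.smul (hw.pd j)
  have hzD : ContDiff ℝ ∞ (fun y => a y • pd j w y + dilation (fun y => a y • pd j w y) y) :=
    hz.add hz.dilation
  have hDa : ContDiff ℝ ∞ (fun y => dilation a y • pd j w y) := ha.dilation.smul (hw.pd j)
  have key : (fun y => a y • pd j (dilation w) y) = fun y =>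
      (a y • pd j w y + dilation (fun y => a y • pd j w y) y) - dilation a y • pd j w y := by
    funext y
    rw [pd_dilation hw j,
      dilation_smul (ha.differentiable (by simp)) ((hw.pd j).differentiable (by simp))]
    module
  rw [key, pd_sub (hzD.differentiable (by simp)) (hDa.differentiable (by simp)),
    pd_add (hz.differentiable (by simp)) (hz.dilation.differentiable (by simp)), pd_dilation hz i]
  funext x
  module

theorem divForm_dilation (hA : ∀ i j, ContDiff ℝ ∞ (A i j)) (hw : ContDiff ℝ ∞ w) :
    divForm A (dilation w) = fun x => (2 : ℝ) • divForm A w x + dilation (divForm A w) x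
      - divForm (fun i j => dilation (A i j)) w x := by
  have hz (i j : Fin d) : ContDiff ℝ ∞ (pd i (fun y => A i j y • pd j w y)) :=
    ((hA i j).smul (hw.pd j)).pd i
  have hD : dilation (divForm A w) = fun x =>
      ∑ i, ∑ j, dilation (pd i (fun y => A i j y • pd j w y)) x := by
    rw [show divForm A w = fun x => ∑ i, ∑ j, pd i (fun y => A i j y • pd j w y) x from rfl,
      dilation_sum _ fun i _ => (ContDiff.sum fun j _ => hz i j).differentiable (by simp)]
    funext x
    exact Finset.sum_congr rfl fun i _ =>
      congrFun (dilation_sum _ fun j _ => (hz i j).differentiable (by simp)) x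
  funext x
  simp only [divForm, pd_smul_pd_dilation (hA _ _) hw, hD, Finset.sum_sub_distrib,
    Finset.sum_add_distrib, Finset.smul_sum]

theorem divForm_smul {ψ : (Fin d → ℝ) → ℝ} (hψ : ContDiff ℝ ∞ ψ)
    (hA : ∀ i j, ContDiff ℝ ∞ (A i j)) (hw : ContDiff ℝ ∞ w) :
    divForm A (fun y => ψ y • w y) = fun x =>
      ∑ i, pd i (fun y => (∑ j, A i j y * pd j ψ y) • w y) x
        + divForm (fun i j y => ψ y * A i j y) w x := by
  have h₁ (i j : Fin d) : ContDiff ℝ ∞ (fun y => (A i j y * pd j ψ y) • w y) :=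
    ((hA i j).mul (hψ.pd j)).smul hw
  have h₂ (i j : Fin d) : ContDiff ℝ ∞ (fun y => (ψ y * A i j y) • pd j w y) :=
    (hψ.mul (hA i j)).smul (hw.pd j)
  have hterm (i j : Fin d) : pd i (fun y => A i j y • pd j (fun y => ψ y • w y) y)
      = fun x => pd i (fun y => (A i j y * pd j ψ y) • w y) x
        + pd i (fun y => (ψ y * A i j y) • pd j w y) x := by
    rw [← pd_add ((h₁ i j).differentiable (by simp)) ((h₂ i j).differentiable (by simp)),
      pd_smul (hψ.differentiable (by simp)) (hw.differentiable (by simp))]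
    congr 1 with y
    module
  have hsum (i : Fin d) : pd i (fun y => (∑ j, A i j y * pd j ψ y) • w y)
      = fun x => ∑ j, pd i (fun y => (A i j y * pd j ψ y) • w y) x := by
    simp only [Finset.sum_smul]
    exact pd_sum _ (fun j _ => (h₁ i j).differentiable (by simp)) i
  funext x
  simp only [divForm, hterm, hsum, Finset.sum_add_distrib]

theorem smul_divForm {ψ : (Fin d → ℝ) → ℝ} (hψ : ContDiff ℝ ∞ ψ)
    (hA : ∀ i j, ContDiff ℝ ∞ (A i j)) (hw : ContDiff ℝ ∞ w) (x : Fin d → ℝ) :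
    ψ x • divForm A w x = divForm (fun i j y => ψ y * A i j y) w x
      - ∑ j, (∑ i, pd i ψ x * A i j x) • pd j w x := by
  have hterm (i j : Fin d) : ψ x • pd i (fun y => A i j y • pd j w y) x
      = pd i (fun y => (ψ y * A i j y) • pd j w y) x - (pd i ψ x * A i j x) • pd j w x := by
    simp only [mul_smul]
    rw [pd_smul (v := fun y => A i j y • pd j w y) (hψ.differentiable (by simp))
      (((hA i j).smul (hw.pd j)).differentiable (by simp))]
    module
  simp only [divForm, Finset.smul_sum, hterm, Finset.sum_sub_distrib, Finset.sum_smul]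
  rw [Finset.sum_comm (f := fun i j => (pd i ψ x * A i j x) • pd j w x)]

end Commutators

section WeightedDivForm

variable {d : ℕ} {F : Type*} [NormedAddCommGroup F] [NormedSpace ℝ F]
  {h : (Fin d → ℝ) → ℝ} {A : Fin d → Fin d → (Fin d → ℝ) → ℝ} {v w : (Fin d → ℝ) → F}

def weightedDivForm (h : (Fin d → ℝ) → ℝ) (A : Fin d → Fin d → (Fin d → ℝ) → ℝ)
    (v : (Fin d → ℝ) → F) : (Fin d → ℝ) → F :=
  fun x => -(h x • divForm A (fun y => h y • v y) x)

def dilationLogDeriv (h : (Fin d → ℝ) → ℝ) : (Fin d → ℝ) → ℝ :=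
  fun x => dilation h x / h x

theorem weightedDivForm_add (hh : ContDiff ℝ ∞ h) (hA : ∀ i j, ContDiff ℝ ∞ (A i j))
    (hv : ContDiff ℝ ∞ v) (hw : ContDiff ℝ ∞ w) :
    weightedDivForm h A (fun y => v y + w y)
      = fun x => weightedDivForm h A v x + weightedDivForm h A w x := by
  have hv' : ContDiff ℝ ∞ (fun y => h y • v y) := hh.smul hv
  have hw' : ContDiff ℝ ∞ (fun y => h y • w y) := hh.smul hw
  funext x
  simp only [weightedDivForm, smul_add]
  rw [divForm_add hA hv' hw', smul_add, neg_add]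

theorem weightedDivForm_const_smul {R : Type*} [Semiring R] [Module R F] [SMulCommClass ℝ R F]
    [ContinuousConstSMul R F] (hh : ContDiff ℝ ∞ h) (hA : ∀ i j, ContDiff ℝ ∞ (A i j))
    (hv : ContDiff ℝ ∞ v) (c : R) :
    weightedDivForm h A (fun y => c • v y) = fun x => c • weightedDivForm h A v x := by
  have hv' : ContDiff ℝ ∞ (fun y => h y • v y) := hh.smul hv
  funext x
  simp only [weightedDivForm, smul_comm (h _) c]
  rw [divForm_const_smul hA hv', smul_comm, smul_neg]

theorem weightedDivForm_dilation_sub (hh : ContDiff ℝ ∞ h) (h₀ : ∀ x, h x ≠ 0)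
    (hA : ∀ i j, ContDiff ℝ ∞ (A i j)) (hv : ContDiff ℝ ∞ v) (x : Fin d → ℝ) :
    weightedDivForm h A (dilation v) x - dilation (weightedDivForm h A v) x
      = (2 : ℝ) • weightedDivForm h A v x
        + h x • (divForm (fun i j => dilation (A i j)) (fun y => h y • v y) x
          + (2 : ℝ) • divForm (fun i j y => dilationLogDeriv h y * A i j y) (fun y => h y • v y) x
          + ∑ i, pd i (fun y => (∑ j, A i j y * pd j (dilationLogDeriv h) y) • (h y • v y)) x
          - ∑ j, (∑ i, pd i (dilationLogDeriv h) x * A i j x) • pd j (fun y => h y • v y) x) := by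
  set ψ := dilationLogDeriv h
  have hψ : ContDiff ℝ ∞ ψ := hh.dilation.div hh h₀
  have hDh (y : Fin d → ℝ) : dilation h y = ψ y * h y := (div_mul_cancel₀ _ (h₀ y)).symm
  set w := fun y => h y • v y
  have hw : ContDiff ℝ ∞ w := hh.smul hv
  have hDv : (fun y => h y • dilation v y) = fun y => dilation w y - ψ y • w y := by
    funext y
    rw [dilation_smul (hh.differentiable (by simp)) (hv.differentiable (by simp))]
    beta_reduce
    rw [hDh, mul_smul]
    abel
  have hDL : dilation (weightedDivForm h A v) x
      = -(h x • (ψ x • divForm A w x) + h x • dilation (divForm A w) x) := by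
    rw [show weightedDivForm h A v = fun y => -(h y • divForm A w y) from rfl, dilation_neg,
      dilation_smul (hh.differentiable (by simp)) ((hw.divForm hA).differentiable (by simp))]
    beta_reduce
    rw [hDh, mul_comm, mul_smul]
  have hψw : ContDiff ℝ ∞ (fun y => ψ y • w y) := hψ.smul hw
  rw [hDL, smul_divForm hψ hA hw, weightedDivForm, hDv, divForm_sub hA hw.dilation hψw,
    divForm_dilation hA hw, divForm_smul hψ hA hw]
  simp only [weightedDivForm]
  module

def commCoeffA (h : (Fin d → ℝ) → ℝ) (A : Fin d → Fin d → (Fin d → ℝ) → ℝ) (i j : Fin d) :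
    (Fin d → ℝ) → ℝ :=
  fun x => -(1 / 2) * (dilation (A i j) x + 2 * (dilationLogDeriv h x * A i j x))

def commCoeffB (h : (Fin d → ℝ) → ℝ) (A : Fin d → Fin d → (Fin d → ℝ) → ℝ) (i : Fin d) :
    (Fin d → ℝ) → ℝ :=
  fun x => -(1 / 2) * (h x * ∑ j, A i j x * pd j (dilationLogDeriv h) x)

def commCoeffC (h : (Fin d → ℝ) → ℝ) (A : Fin d → Fin d → (Fin d → ℝ) → ℝ) (j : Fin d) :
    (Fin d → ℝ) → ℝ :=
  fun x => -(1 / 2) * (h x * ∑ i, pd i (dilationLogDeriv h) x * A i j x)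

theorem weightedDivForm_dilation_comm (hh : ContDiff ℝ ∞ h) (h₀ : ∀ x, h x ≠ 0)
    (hA : ∀ i j, ContDiff ℝ ∞ (A i j)) (hv : ContDiff ℝ ∞ v) (x : Fin d → ℝ) :
    weightedDivForm h A (dilation v) x - dilation (weightedDivForm h A v) x
      = (2 : ℝ) • (weightedDivForm h A v x + weightedDivForm h (commCoeffA h A) v x
        + ∑ j, -(h x • pd j (fun y => commCoeffB h A j y • v y) x)
        + ∑ j, commCoeffC h A j x • pd j (fun y => h y • v y) x) := by
  set ψ := dilationLogDeriv h with hψ_def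
  have hψ : ContDiff ℝ ∞ ψ := hh.dilation.div hh h₀
  have hw : ContDiff ℝ ∞ (fun y => h y • v y) := hh.smul hv
  have hDA (i j : Fin d) : ContDiff ℝ ∞ (dilation (A i j)) := (hA i j).dilation
  have hψA (i j : Fin d) : ContDiff ℝ ∞ (fun y => ψ y * A i j y) := hψ.mul (hA i j)
  have h2ψA (i j : Fin d) : ContDiff ℝ ∞ (fun y => 2 * (ψ y * A i j y)) :=
    contDiff_const.mul (hψA i j)
  have ha : divForm (commCoeffA h A) (fun y => h y • v y) x
      = (-(1 / 2) : ℝ) • (divForm (fun i j => dilation (A i j)) (fun y => h y • v y) x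
        + (2 : ℝ) • divForm (fun i j y => ψ y * A i j y) (fun y => h y • v y) x) := by
    rw [show commCoeffA h A = fun i j y => -(1 / 2) * (dilation (A i j) y + 2 * (ψ y * A i j y))
      from rfl, divForm_coeff_const_mul (fun i j => (hDA i j).add (h2ψA i j)) hw,
      divForm_coeff_add hDA h2ψA hw, divForm_coeff_const_mul hψA hw]
  have hb (i : Fin d) : pd i (fun y => commCoeffB h A i y • v y) x
      = (-(1 / 2) : ℝ) • pd i (fun y => (∑ j, A i j y * pd j ψ y) • (h y • v y)) x := by
    have hβ : ContDiff ℝ ∞ (fun y => (∑ j, A i j y * pd j ψ y) • (h y • v y)) :=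
      (ContDiff.sum fun j _ => (hA i j).mul (hψ.pd j)).smul hw
    rw [← congrFun (pd_const_smul (hβ.differentiable (by simp)) _ i) x]
    congr 1 with y
    simp only [commCoeffB, smul_smul, ← hψ_def]
    ring_nf
  rw [weightedDivForm_dilation_sub hh h₀ hA hv x]
  simp only [weightedDivForm, ha, hb, commCoeffC, mul_smul, ← Finset.smul_sum,
    Finset.sum_neg_distrib]
  module

theorem A0_eq (u : (Fin d → ℝ) → ℂ) :
    A0 d u = fun x => -Complex.I • (dilation u x + ((d : ℂ) / 2) • u x) := by
  funext x
  simp [A0, dilation, Complex.real_smul]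

theorem weightedDivForm_A0_sub (hh : ContDiff ℝ ∞ h)
    (hA : ∀ i j, ContDiff ℝ ∞ (A i j)) {u : (Fin d → ℝ) → ℂ} (hu : ContDiff ℝ ∞ u)
    (x : Fin d → ℝ) :
    weightedDivForm h A (A0 d u) x - A0 d (weightedDivForm h A u) x
      = -Complex.I * (weightedDivForm h A (dilation u) x - dilation (weightedDivForm h A u) x) := by
  have hdu : ContDiff ℝ ∞ (fun y => ((d : ℂ) / 2) • u y) := hu.const_smul _
  have hsum : ContDiff ℝ ∞ (fun y => dilation u y + ((d : ℂ) / 2) • u y) := hu.dilation.add hdu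
  rw [A0_eq, A0_eq, weightedDivForm_const_smul hh hA hsum,
    weightedDivForm_add hh hA hu.dilation hdu, weightedDivForm_const_smul hh hA hu]
  simp only [smul_eq_mul]
  ring

end WeightedDivForm

theorem exists_pos_le_of_eventually_le {E : Type*} [TopologicalSpace E] [Nonempty E]
    {f : E → ℝ} (hf : Continuous f) (hpos : ∀ x, 0 < f x) {c : ℝ} (hc : 0 < c)
    (h : ∀ᶠ x in cocompact E, c ≤ f x) : ∃ c' > 0, ∀ x, c' ≤ f x := by
  -- `min f c` is constant near infinity, hence attains its (positive) minimum.
  obtain ⟨x₀, hx₀⟩ := (hf.min continuous_const).exists_forall_le' (Classical.arbitrary E)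
    (h.mono fun x hx => by rw [min_eq_right hx]; exact min_le_right _ _)
  exact ⟨min (f x₀) c, lt_min (hpos x₀) hc, fun x => (hx₀ x).trans (min_le_left _ _)⟩

namespace MetricH1

variable {d : ℕ} {ρ : ℝ} {F : Type*} [NormedAddCommGroup F] [NormedSpace ℝ F] (M : MetricH1 d ρ)

def det (x : Fin d → ℝ) : ℝ := (Matrix.of fun i j => M.g i j x).det

theorem det_pos (x : Fin d → ℝ) : 0 < M.det x := (M.posdef x).det_pos

theorem decaysTo_g (i j : Fin d) :
    DecaysTo (-ρ) ((1 : Matrix (Fin d) (Fin d) ℝ) i j) (M.g i j) := by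
  refine ⟨(M.smooth i j).sub contDiff_const, fun n α _ => ?_⟩
  obtain ⟨C, -, hC⟩ := M.decay α i j
  exact ⟨C, fun x => by simpa [Matrix.one_apply, neg_sub_comm] using hC x⟩

theorem decaysTo_det (hρ : 0 < ρ) : DecaysTo (-ρ) 1 M.det := by
  have h := Paper.decaysTo_det (neg_nonpos.2 hρ.le) M.decaysTo_g
  rw [Matrix.det_one] at h
  exact h

theorem exists_pos_le_det (hρ : 0 < ρ) : ∃ c > 0, ∀ x, c ≤ M.det x := by
  have hlim : Tendsto M.det (cocompact _) (𝓝 1) := by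
    simpa using ((M.decaysTo_det hρ).tendsto_cocompact (neg_neg_of_pos hρ)).add_const 1
  exact exists_pos_le_of_eventually_le (M.decaysTo_det hρ).contDiff.continuous M.det_pos
    one_half_pos ((hlim.eventually_const_lt (by norm_num : (1 / 2 : ℝ) < 1)).mono fun _ => le_of_lt)

theorem decaysTo_det_rpow (hρ : 0 < ρ) (q : ℝ) : DecaysTo (-ρ) 1 (fun x => M.det x ^ q) := by
  obtain ⟨c, hc, hcdet⟩ := M.exists_pos_le_det hρ
  exact (M.decaysTo_det hρ).rpow (neg_nonpos.2 hρ.le) hc hcdet q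

theorem ginv_apply (x : Fin d → ℝ) (i j : Fin d) :
    M.ginv x i j = (M.det x)⁻¹ * (Matrix.of fun a b => M.g a b x).adjugate i j := by
  simp [ginv, det, Matrix.inv_def, Ring.inverse_eq_inv']

theorem decaysTo_ginv (hρ : 0 < ρ) (i j : Fin d) :
    DecaysTo (-ρ) ((1 : Matrix (Fin d) (Fin d) ℝ) i j) (fun x => M.ginv x i j) := by
  have hs : -ρ ≤ 0 := neg_nonpos.2 hρ.le
  have hinv : DecaysTo (-ρ) 1 (fun x => (M.det x)⁻¹) :=
    (M.decaysTo_det_rpow hρ (-1)).congr fun x => Real.rpow_neg_one _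
  have hadj : DecaysTo (-ρ) ((1 : Matrix (Fin d) (Fin d) ℝ).adjugate i j)
      (fun x => (Matrix.of fun a b => M.g a b x).adjugate i j) := by
    simp only [Matrix.adjugate_apply]
    refine Paper.decaysTo_det hs fun a b => ?_
    rcases eq_or_ne a j with rfl | ha
    · simpa using decaysTo_const (d := d) (-ρ) _
    · simpa [Matrix.updateRow_ne ha] using M.decaysTo_g a b
  simpa using (hinv.mul hs hadj).congr fun x => (M.ginv_apply x i j).symm

def weight (x : Fin d → ℝ) : ℝ := (M.gd x)⁻¹

def coeff (i j : Fin d) (x : Fin d → ℝ) : ℝ := M.ginv x i j * M.gd x ^ 2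

theorem weight_ne_zero (x : Fin d → ℝ) : M.weight x ≠ 0 :=
  inv_ne_zero (Real.rpow_pos_of_pos (M.det_pos x) _).ne'

theorem decaysTo_gd (hρ : 0 < ρ) : DecaysTo (-ρ) 1 M.gd := M.decaysTo_det_rpow hρ (1 / 4)

theorem decaysTo_weight (hρ : 0 < ρ) : DecaysTo (-ρ) 1 M.weight :=
  (M.decaysTo_det_rpow hρ (-(1 / 4))).congr fun x => Real.rpow_neg (M.det_pos x).le _

theorem decaysTo_coeff (hρ : 0 < ρ) (i j : Fin d) :
    DecaysTo (-ρ) ((1 : Matrix (Fin d) (Fin d) ℝ) i j) (M.coeff i j) := by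
  have h := (M.decaysTo_ginv hρ i j).mul (neg_nonpos.2 hρ.le) (M.decaysTo_det_rpow hρ (1 / 2))
  simpa using h.congr fun x => by
    show _ = M.ginv x i j * (M.det x ^ (1 / 4 : ℝ)) ^ 2
    rw [← Real.rpow_natCast, ← Real.rpow_mul (M.det_pos x).le]
    norm_num

theorem dtil_eq (j : Fin d) (u : (Fin d → ℝ) → F) :
    dtil M j u = pd j (fun y => M.weight y • u y) := rfl

theorem dtilStar_eq (j : Fin d) (v : (Fin d → ℝ) → F) :
    dtilStar M j v = fun x => -(M.weight x • pd j v x) := rfl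

theorem pop_eq_weightedDivForm : Pop (F := F) M = weightedDivForm M.weight M.coeff := by
  funext u x
  simp [Pop, weightedDivForm, divForm, dtil_eq, weight, coeff, Finset.smul_sum]

theorem sum_dtilStar_smul_dtil (a : Fin d → Fin d → (Fin d → ℝ) → ℝ) (u : (Fin d → ℝ) → F)
    (x : Fin d → ℝ) :
    ∑ j, ∑ k, dtilStar M j (fun y => a j k y • dtil M k u y) x
      = weightedDivForm M.weight a u x := by
  simp [dtilStar_eq, dtil_eq, weightedDivForm, divForm, Finset.smul_sum]

theorem isSymbol_dilationLogDeriv_weight (hρ : 0 < ρ) :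
    IsSymbol (-ρ) (dilationLogDeriv M.weight) :=
  (((M.decaysTo_weight hρ).isSymbol_dilation.mul
    ((M.decaysTo_gd hρ).isSymbol (neg_nonpos.2 hρ.le))).mono (by simp)).congr fun x => by
      simp [dilationLogDeriv, weight, div_inv_eq_mul]

theorem isSymbol_commCoeffA (hρ : 0 < ρ) (i j : Fin d) :
    IsSymbol (-ρ) (commCoeffA M.weight M.coeff i j) :=
  have hψG := (M.isSymbol_dilationLogDeriv_weight hρ).mul
    ((M.decaysTo_coeff hρ i j).isSymbol (neg_nonpos.2 hρ.le))
  (((M.decaysTo_coeff hρ i j).isSymbol_dilation.add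
    ((hψG.mono (by simp)).const_mul 2)).const_mul _)

theorem isSymbol_commCoeffB (hρ : 0 < ρ) (i : Fin d) :
    IsSymbol (-ρ - 1) (commCoeffB M.weight M.coeff i) :=
  have hs : -ρ ≤ 0 := neg_nonpos.2 hρ.le
  ((((M.decaysTo_weight hρ).isSymbol hs).mul (IsSymbol.sum _ fun j _ =>
    ((M.decaysTo_coeff hρ i j).isSymbol hs).mul
      ((M.isSymbol_dilationLogDeriv_weight hρ).pd j))).const_mul _).mono (by simp)

theorem isSymbol_commCoeffC (hρ : 0 < ρ) (j : Fin d) :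
    IsSymbol (-ρ - 1) (commCoeffC M.weight M.coeff j) :=
  have hs : -ρ ≤ 0 := neg_nonpos.2 hρ.le
  ((((M.decaysTo_weight hρ).isSymbol hs).mul (IsSymbol.sum _ fun i _ =>
    ((M.isSymbol_dilationLogDeriv_weight hρ).pd i).mul
      ((M.decaysTo_coeff hρ i j).isSymbol hs))).const_mul _).mono (by simp)

end MetricH1

end Paper

open Paper in
theorem stmt7_general (d : ℕ) (ρ : ℝ) (hρ : 0 < ρ) (M : MetricH1 d ρ) :
    ∃ a : Fin d → Fin d → (Fin d → ℝ) → ℝ,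
    ∃ b c : Fin d → (Fin d → ℝ) → ℝ,
      (∀ j k, RDecay ρ 0 (a j k)) ∧
      (∀ j, RDecay ρ 1 (b j)) ∧
      (∀ j, RDecay ρ 1 (c j)) ∧
      ∀ u : SchwartzMap (Fin d → ℝ) ℂ, ∀ x,
        Pop M (A0 d u) x - A0 d (Pop M u) x =
          -2 * Complex.I *
            (Pop M (⇑u) x +
              (∑ j, ∑ k, dtilStar M j (fun y => a j k y • dtil M k (⇑u) y) x) +
              (∑ j, dtilStar M j (fun y => b j y • u y) x) +
              (∑ j, c j x • dtil M j (⇑u) x)) := by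
  have hh : ContDiff ℝ ∞ M.weight := (M.decaysTo_weight hρ).contDiff
  have hA (i j : Fin d) : ContDiff ℝ ∞ (M.coeff i j) := (M.decaysTo_coeff hρ i j).contDiff
  refine ⟨commCoeffA M.weight M.coeff, commCoeffB M.weight M.coeff, commCoeffC M.weight M.coeff,
    fun j k => ((M.isSymbol_commCoeffA hρ j k).mono (by simp)).rdecay,
    fun j => ((M.isSymbol_commCoeffB hρ j).mono (by simp)).rdecay,
    fun j => ((M.isSymbol_commCoeffC hρ j).mono (by simp)).rdecay, fun u x => ?_⟩
  have hu : ContDiff ℝ ∞ u := u.smooth ⊤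
  rw [M.pop_eq_weightedDivForm, weightedDivForm_A0_sub hh hA hu,
    weightedDivForm_dilation_comm hh M.weight_ne_zero hA hu, M.sum_dtilStar_smul_dtil]
  simp only [M.dtilStar_eq, M.dtil_eq, Complex.real_smul]
  push_cast
  ring

open Paper in
theorem stmt7 (d : ℕ) (hd : 3 ≤ d) (ρ : ℝ) (hρ : 0 < ρ) (M : MetricH1 d ρ) :
    ∃ a : Fin d → Fin d → (Fin d → ℝ) → ℝ,
    ∃ b c : Fin d → (Fin d → ℝ) → ℝ,
      (∀ j k, RDecay ρ 0 (a j k)) ∧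
      (∀ j, RDecay ρ 1 (b j)) ∧
      (∀ j, RDecay ρ 1 (c j)) ∧
      ∀ u : SchwartzMap (Fin d → ℝ) ℂ, ∀ x,
        Pop M (A0 d u) x - A0 d (Pop M u) x =
          -2 * Complex.I *
            (Pop M (⇑u) x +
              (∑ j, ∑ k, dtilStar M j (fun y => a j k y • dtil M k (⇑u) y) x) +
              (∑ j, dtilStar M j (fun y => b j y • u y) x) +
              (∑ j, c j x • dtil M j (⇑u) x)) :=
  stmt7_general d ρ hρ M
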